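/- arXiv:1905.01945 — 11 statements merged into one kernel-verified Lean document; each statement's English description precedes it below -/
import Mathlib

section
/- Let L be a finite locally branched lattice. Then every interval of L is atomic: for all a ≤ b in L and every p with a ≤ p ≤ b, one has p = a ⊔ sSup {x ∈ L : a ⋖ x and x ≤ p}, i.e., p is the join (within the interval [a,b]) of the atoms of the interval [a,b] that lie below p. -/
/-- In a finite locally branched lattice, every interval is atomic: every element
`p` of an interval `[a,b]` is the join, within the interval, of the atoms of the
interval lying below `p`. -/
theorem locallyBranched_intervals_atomic
    {L : Type*} [CompleteLattice L] [Fintype L]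
    (hlb : ∀ a b c : L, a ⋖ b → b ⋖ c → ∃ d : L, d ≠ b ∧ a < d ∧ d < c) :
    ∀ a b p : L, a ≤ b → a ≤ p → p ≤ b →
      p = a ⊔ sSup {x : L | a ⋖ x ∧ x ≤ p} := by
  intro a b p _ hap hpb
  set S : Set L := {x : L | a ⋖ x ∧ x ≤ p} with hS
  have hq : a ⊔ sSup S ≤ p := by
    refine sup_le hap (sSup_le ?_)
    rintro x ⟨-, hxp⟩; exact hxp
  refine le_antisymm ?_ hq
  -- key claim by well-founded induction
  have key : ∀ y : L, a ≤ y → y ≤ p → y ≤ a ⊔ sSup S := by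
    intro y
    induction y using WellFoundedLT.induction with
    | ind y IH =>
      intro hay hyp
      rcases eq_or_lt_of_le hay with rfl | hay'
      · exact le_sup_left
      -- pick w with a ≤ w ⋖ y
      obtain ⟨w, haw, hwy⟩ := hay'.exists_le_covby
      rcases eq_or_lt_of_le haw with rfl | haw'
      · -- y is an atom of the interval
        exact le_trans (le_sSup (show y ∈ S from ⟨hwy, hyp⟩)) le_sup_right
      -- pick u with a ≤ u ⋖ w
      obtain ⟨u, hau, huw⟩ := haw'.exists_le_covby
      obtain ⟨d, hdw, hud, hdy⟩ := hlb u w y huw hwy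
      have hdnw : ¬ d ≤ w := fun h => huw.2 hud (lt_of_le_of_ne h hdw)
      have hyeq : y = w ⊔ d := by
        have h1 : w < w ⊔ d := lt_of_le_of_ne le_sup_left (fun h => hdnw (h ▸ le_sup_right))
        have h2 : w ⊔ d ≤ y := sup_le hwy.le hdy.le
        exact (h2.lt_or_eq.resolve_left (hwy.2 h1)).symm
      have hw := IH w hwy.lt haw (hwy.le.trans hyp)
      have hd := IH d hdy (hau.trans hud.le) (hdy.le.trans hyp)
      rw [hyeq]
      exact sup_le hw hd
  exact key p hap le_rfl
end

section
/- Let L be a finite lattice such that every interval of L is atomic, i.e., for all a ≤ b in L and every p with a ≤ p ≤ b one has p = a ⊔ sSup {x ∈ L : a ⋖ x and x ≤ p}. Then L is locally branched: for every saturated chain a ⋖ b ⋖ c in L there exists d ≠ b with a < d < c. -/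
/-- If every interval of a finite lattice is atomic, then the lattice is locally
branched: for every saturated chain `a ⋖ b ⋖ c` there exists `d ≠ b` with
`a < d < c`. -/
theorem intervals_atomic_locallyBranched
    {L : Type*} [CompleteLattice L] [Fintype L]
    (h : ∀ a b p : L, a ≤ b → a ≤ p → p ≤ b →
      p = a ⊔ sSup {x : L | a ⋖ x ∧ x ≤ p}) :
    ∀ a b c : L, a ⋖ b → b ⋖ c → ∃ d : L, d ≠ b ∧ a < d ∧ d < c := by
  intro a b c hab hbc
  have hac : a ≤ c := hab.le.trans hbc.le
  have hc := h a c c hac hac le_rfl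
  by_contra hcon
  push_neg at hcon
  have hS : sSup {x : L | a ⋖ x ∧ x ≤ c} ≤ b := by
    apply sSup_le
    intro x hx
    rcases eq_or_ne x b with h' | h'
    · exact h'.le
    · have hxc : x < c := hx.2.lt_of_ne (by rintro rfl; exact hx.1.2 hab.lt hbc.lt)
      exact absurd hxc (hcon x h' hx.1.lt)
  have : c ≤ b := hc ▸ sup_le hab.le hS
  exact absurd hbc.lt (not_lt_of_ge this)
end

section
/- Let L be a finite lattice. Then L is locally branched if and only if every interval of L is coatomic, i.e., for all a ≤ b in L and every p with a ≤ p ≤ b one has p = b ⊓ sInf {y ∈ L : y ⋖ b and p ≤ y} (p is the meet, within the interval [a,b], of the coatoms of [a,b] lying above p). -/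
/-- A finite lattice is locally branched if and only if every interval is
coatomic: every element `p` of an interval `[a,b]` is the meet, within the
interval, of the coatoms of the interval lying above `p`. -/
theorem locallyBranched_iff_intervals_coatomic
    {L : Type*} [CompleteLattice L] [Fintype L] :
    (∀ a b c : L, a ⋖ b → b ⋖ c → ∃ d : L, d ≠ b ∧ a < d ∧ d < c) ↔
      (∀ a b p : L, a ≤ b → a ≤ p → p ≤ b →
        p = b ⊓ sInf {y : L | y ⋖ b ∧ p ≤ y}) := by
  constructor
  · -- locally branched → intervals coatomic
    intro hbr a b p _ _ hpb
    have wf : WellFounded ((· > ·) : L → L → Prop) := IsWellFounded.wf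
    have key : ∀ p : L, p ≤ b → b ⊓ sInf {y : L | y ⋖ b ∧ p ≤ y} ≤ p := by
      intro p
      induction p using wf.induction with
      | _ p IH =>
        intro hpb
        rcases eq_or_lt_of_le hpb with rfl | hlt
        · exact inf_le_left
        · by_cases hcov : p ⋖ b
          · exact inf_le_right.trans (sInf_le ⟨hcov, le_rfl⟩)
          · -- pick p ⋖ m ≤ b, necessarily m < b
            obtain ⟨m, hpm, hmb⟩ := exists_covBy_le_of_lt hlt
            have hmltb : m < b := lt_of_le_of_ne hmb (by rintro rfl; exact hcov hpm)
            -- pick m ⋖ m' ≤ b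
            obtain ⟨m', hmm', hm'b⟩ := exists_covBy_le_of_lt hmltb
            -- branch: d ≠ m with p < d < m'
            obtain ⟨d, hdm, hpd, hdm'⟩ := hbr p m m' hpm hmm'
            -- pick p ⋖ e ≤ d
            obtain ⟨e, hpe, hed⟩ := exists_covBy_le_of_lt hpd
            have heb : e ≤ b := hed.trans (hdm'.le.trans hm'b)
            have hem : e ≠ m := by
              rintro rfl
              exact hdm ((hmm'.eq_or_eq hed hdm'.le).resolve_right hdm'.ne)
            have hsubm : {y : L | y ⋖ b ∧ m ≤ y} ⊆ {y : L | y ⋖ b ∧ p ≤ y} :=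
              fun y hy => ⟨hy.1, hpm.le.trans hy.2⟩
            have hsube : {y : L | y ⋖ b ∧ e ≤ y} ⊆ {y : L | y ⋖ b ∧ p ≤ y} :=
              fun y hy => ⟨hy.1, hpe.le.trans hy.2⟩
            have hqm : b ⊓ sInf {y : L | y ⋖ b ∧ p ≤ y} ≤ m :=
              (inf_le_inf_left b (sInf_le_sInf hsubm)).trans (IH m hpm.lt hmb)
            have hqe : b ⊓ sInf {y : L | y ⋖ b ∧ p ≤ y} ≤ e :=
              (inf_le_inf_left b (sInf_le_sInf hsube)).trans (IH e hpe.lt heb)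
            -- m ⊓ e = p
            have hmep : m ⊓ e = p := by
              rcases hpm.eq_or_eq (le_inf hpm.le hpe.le) inf_le_left with h | h
              · exact h
              · exfalso
                have hme : m ≤ e := (le_of_eq h.symm).trans inf_le_right
                exact hem ((hpe.eq_or_eq hpm.le hme).resolve_left hpm.lt.ne').symm
            calc b ⊓ sInf {y : L | y ⋖ b ∧ p ≤ y} ≤ m ⊓ e := le_inf hqm hqe
              _ = p := hmep
    exact le_antisymm (le_inf hpb (le_sInf fun y hy => hy.2)) (key p hpb)
  · -- intervals coatomic → locally branched
    intro H a b c hab hbc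
    by_contra hno
    push_neg at hno
    have ha := H a c a (hab.le.trans hbc.le) le_rfl (hab.le.trans hbc.le)
    have hbS : b ∈ {y : L | y ⋖ c ∧ a ≤ y} := ⟨hbc, hab.le⟩
    have hsub : {y : L | y ⋖ c ∧ a ≤ y} ⊆ {b} := by
      intro y hy
      have hay : a < y := lt_of_le_of_ne hy.2 (by
        rintro rfl
        exact hy.1.2 hab.lt hbc.lt)
      by_contra hyb
      exact hno y hyb hay hy.1.lt
    have hinf : sInf {y : L | y ⋖ c ∧ a ≤ y} = b :=
      le_antisymm (sInf_le hbS) (le_sInf fun y hy => (hsub hy ▸ le_rfl))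
    rw [hinf, inf_eq_right.mpr hbc.le] at ha
    exact hab.lt.ne ha
end

section
/- Let L be a finite lattice. Then every interval of L is atomic if and only if every interval of L is coatomic. Here 'every interval is atomic' means: for all a ≤ b in L and every p with a ≤ p ≤ b, p = a ⊔ sSup {x : a ⋖ x and x ≤ p}; and 'every interval is coatomic' means: for all a ≤ b and a ≤ p ≤ b, p = b ⊓ sInf {y : y ⋖ b and p ≤ y}. -/
/-!
By order duality it suffices to show that atomistic intervals force coatomistic ones. Let
`m = b ⊓ ⋀ {coatoms of [p, b]}` and suppose `p < m`. Pick an atom `x` of `[p, m]` and an element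
`y ∈ [p, b]` maximal with `x ≰ y`. Every element strictly above `y` in `[y, b]` lies above `x`,
so every atom of `[y, b]` equals `y ⊔ x`; atomisticity of `[y, b]` then makes `y` a coatom of
`[p, b]`, whence `x ≤ m ≤ y`, a contradiction.
-/

def IntervalsAtomistic (L : Type*) [CompleteLattice L] : Prop :=
  ∀ a p : L, a ≤ p → p = a ⊔ sSup {x : L | a ⋖ x ∧ x ≤ p}

def IntervalsCoatomistic (L : Type*) [CompleteLattice L] : Prop :=
  ∀ p b : L, p ≤ b → p = b ⊓ sInf {y : L | y ⋖ b ∧ p ≤ y}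

section

variable {L : Type*} [CompleteLattice L]

theorem intervalsAtomistic_orderDual_iff :
    IntervalsAtomistic Lᵒᵈ ↔ IntervalsCoatomistic L := by
  simp only [IntervalsAtomistic, IntervalsCoatomistic, OrderDual.forall,
    ← toDual_covBy_toDual_iff (α := L)]
  exact ⟨fun h p b hpb => h b p hpb, fun h b p hpb => h p b hpb⟩

theorem intervalsCoatomistic_orderDual_iff :
    IntervalsCoatomistic Lᵒᵈ ↔ IntervalsAtomistic L :=
  (intervalsAtomistic_orderDual_iff (L := Lᵒᵈ)).symm

theorem covBy_of_forall_lt_le_imp_le {x y b : L}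
    (hb : b = y ⊔ sSup {u : L | y ⋖ u ∧ u ≤ b}) (hyb : y < b) (hxy : ¬ x ≤ y)
    (habove : ∀ z, y < z → z ≤ b → x ≤ z) : y ⋖ b := by
  have hy_lt : y < y ⊔ x := left_lt_sup.mpr hxy
  have hb_le : b ≤ y ⊔ x := by
    rw [hb]
    refine sup_le le_sup_left (sSup_le fun u hu => ?_)
    have hle : y ⊔ x ≤ u := sup_le hu.1.le (habove u hu.1.lt hu.2)
    exact ((hu.1.eq_or_eq hy_lt.le hle).resolve_left hy_lt.ne').ge
  exact ⟨hyb, fun z hyz hzb => hzb.not_ge (hb_le.trans (sup_le hyz.le (habove z hyz hzb.le)))⟩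

theorem exists_maximal_not_ge [Finite L] {x p b : L} (hpb : p ≤ b) (hxp : ¬ x ≤ p) :
    ∃ y, p ≤ y ∧ y ≤ b ∧ ¬ x ≤ y ∧ ∀ z, y < z → z ≤ b → x ≤ z := by
  obtain ⟨y, hpy, hy⟩ := Finite.exists_le_maximal (p := fun y => y ≤ b ∧ ¬ x ≤ y) ⟨hpb, hxp⟩
  refine ⟨y, hpy, hy.prop.1, hy.prop.2, fun z hyz hzb => ?_⟩
  by_contra hxz
  exact hyz.not_ge (hy.le_of_ge ⟨hzb, hxz⟩ hyz.le)

theorem IntervalsAtomistic.intervalsCoatomistic [Finite L] (h : IntervalsAtomistic L) :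
    IntervalsCoatomistic L := by
  intro p b hpb
  set m := b ⊓ sInf {y : L | y ⋖ b ∧ p ≤ y}
  have hpm : p ≤ m := le_inf hpb (le_sInf fun y hy => hy.2)
  refine hpm.eq_of_not_lt fun hpm_lt => ?_
  obtain ⟨x, hpx, hxm⟩ := exists_covBy_le_of_lt hpm_lt
  have hxb : x ≤ b := hxm.trans inf_le_left
  obtain ⟨y, hpy, hyb, hxy, habove⟩ := exists_maximal_not_ge hpb hpx.lt.not_ge
  have hyb_lt : y < b := hyb.lt_of_ne fun hyb_eq => hxy (hyb_eq ▸ hxb)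
  have hyb_cov : y ⋖ b := covBy_of_forall_lt_le_imp_le (h y b hyb) hyb_lt hxy habove
  exact hxy (hxm.trans (inf_le_right.trans (sInf_le ⟨hyb_cov, hpy⟩)))

theorem IntervalsCoatomistic.intervalsAtomistic [Finite L] (h : IntervalsCoatomistic L) :
    IntervalsAtomistic L :=
  intervalsCoatomistic_orderDual_iff.mp
    (intervalsAtomistic_orderDual_iff.mpr h).intervalsCoatomistic

end

/-- In a finite lattice, every interval is atomic if and only if every interval
is coatomic. -/
theorem intervals_atomic_iff_intervals_coatomic
    {L : Type*} [CompleteLattice L] [Fintype L] :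
    (∀ a b p : L, a ≤ b → a ≤ p → p ≤ b →
        p = a ⊔ sSup {x : L | a ⋖ x ∧ x ≤ p}) ↔
      (∀ a b p : L, a ≤ b → a ≤ p → p ≤ b →
        p = b ⊓ sInf {y : L | y ⋖ b ∧ p ≤ y}) := by
  have atomistic_iff : (∀ a b p : L, a ≤ b → a ≤ p → p ≤ b →
      p = a ⊔ sSup {x : L | a ⋖ x ∧ x ≤ p}) ↔ IntervalsAtomistic L :=
    ⟨fun h a p hap => h a p p hap hap le_rfl, fun h a _ p _ hap _ => h a p hap⟩
  have coatomistic_iff : (∀ a b p : L, a ≤ b → a ≤ p → p ≤ b →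
      p = b ⊓ sInf {y : L | y ⋖ b ∧ p ≤ y}) ↔ IntervalsCoatomistic L :=
    ⟨fun h p b hpb => h p b p hpb le_rfl hpb, fun h _ b p _ _ hpb => h p b hpb⟩
  rw [atomistic_iff, coatomistic_iff]
  exact ⟨IntervalsAtomistic.intervalsCoatomistic, IntervalsCoatomistic.intervalsAtomistic⟩
end

section
/- Every finite locally branched lattice L is atomic: every element p of L equals the supremum of the set of atoms of L below p. -/
/-- Every finite locally branched lattice is atomic: every element is the
supremum of the atoms (elements covering `⊥`) below it. -/
theorem locallyBranched_atomic
    {L : Type*} [CompleteLattice L] [Fintype L]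
    (hlb : ∀ a b c : L, a ⋖ b → b ⋖ c → ∃ d : L, d ≠ b ∧ a < d ∧ d < c) :
    ∀ p : L, p = sSup {a : L | ⊥ ⋖ a ∧ a ≤ p} := by
  have wfLT : WellFounded ((· < ·) : L → L → Prop) := IsWellFounded.wf
  have wfGT : WellFounded ((· > ·) : L → L → Prop) := IsWellFounded.wf
  -- every element strictly above ⊥ covers something
  have hcov : ∀ m : L, ⊥ < m → ∃ z : L, z ⋖ m := by
    intro m hm
    obtain ⟨z, hz, hzmax⟩ := wfGT.has_min {z | z < m} ⟨⊥, hm⟩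
    exact ⟨z, hz, fun {w} hzw hwm => hzmax w hwm hzw⟩
  intro p
  refine wfLT.induction (C := fun p => p = sSup {a : L | ⊥ ⋖ a ∧ a ≤ p}) p ?_
  intro p ih
  refine le_antisymm ?_ (sSup_le fun a ha => ha.2)
  rcases eq_or_lt_of_le (bot_le : (⊥ : L) ≤ p) with h | h
  · rw [← h]; exact bot_le
  obtain ⟨q, hq⟩ := hcov p h
  -- find a minimal element below p not below q; it is an atom
  obtain ⟨x, ⟨hxp, hxq⟩, hxmin⟩ := wfLT.has_min {x | x ≤ p ∧ ¬ x ≤ q}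
    ⟨p, le_refl p, fun hpq => absurd (lt_of_le_of_lt hpq hq.lt) (lt_irrefl p)⟩
  have hle : ∀ y : L, y < x → y ≤ q := by
    intro y hy
    by_contra hyq
    exact hxmin y ⟨hy.le.trans hxp, hyq⟩ hy
  have hxatom : ⊥ ⋖ x := by
    set m := q ⊓ x with hm
    have hmx : m < x := lt_of_le_of_ne inf_le_right (fun hmx => hxq (hmx ▸ inf_le_left))
    have hmcov : m ⋖ x := ⟨hmx, fun {w} hmw hwx => absurd (le_inf (hle w hwx) hwx.le) (not_le_of_gt hmw)⟩
    rcases eq_or_lt_of_le (bot_le : (⊥ : L) ≤ m) with hb | hb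
    · rwa [← hb] at hmcov
    · obtain ⟨z, hz⟩ := hcov m hb
      obtain ⟨d, hdm, hzd, hdx⟩ := hlb z m x hz hmcov
      have : d ≤ m := le_inf (hle d hdx) hdx.le
      exact absurd (lt_of_le_of_ne this hdm) (hz.2 hzd)
  -- p = q ⊔ x
  have hsup : q ⊔ x ≤ p := sup_le hq.lt.le hxp
  have hqlt : q < q ⊔ x := left_lt_sup.2 hxq
  have hpeq : p ≤ q ⊔ x := by
    by_contra h'
    exact hq.2 hqlt (lt_of_le_of_ne hsup (fun he => h' he.ge))
  refine hpeq.trans (sup_le ?_ (le_sSup ⟨hxatom, hxp⟩))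
  calc q = sSup {a : L | ⊥ ⋖ a ∧ a ≤ q} := ih q hq.lt
    _ ≤ sSup {a : L | ⊥ ⋖ a ∧ a ≤ p} :=
        sSup_le_sSup (fun a ha => ⟨ha.1, ha.2.trans hq.lt.le⟩)
end

section
/- Every finite locally branched lattice L is coatomic: every element p of L equals the infimum of the set of coatoms of L above p. -/
/-!
Downward induction on `p`. If `p` is neither `⊤` nor a coatom, pick covers `p ⋖ b ⋖ c`; a
bypass `p < d < c` with `d ≠ b` contains a cover `e ≤ d` of `p` other than `b`. Two distinct
upper covers of `p` meet in `p`, and each of `b`, `e` is by induction the meet of the coatoms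
above it, hence so is `p = b ⊓ e`.
-/

def LocallyBranched (α : Type*) [Preorder α] : Prop :=
  ∀ a b c : α, a ⋖ b → b ⋖ c → ∃ d : α, d ≠ b ∧ a < d ∧ d < c

namespace LocallyBranched

variable {α : Type*}

theorem exists_covBy_ne [PartialOrder α] [IsStronglyAtomic α] (h : LocallyBranched α)
    {a b c : α} (hab : a ⋖ b) (hbc : b ⋖ c) : ∃ e, a ⋖ e ∧ e ≠ b := by
  obtain ⟨d, hdb, had, hdc⟩ := h a b c hab hbc
  obtain ⟨e, hae, hed⟩ := exists_covBy_le_of_lt had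
  refine ⟨e, hae, ?_⟩
  rintro rfl
  exact hbc.2 (hed.lt_of_ne hdb.symm) hdc

theorem exists_lt_lt_inf_eq [Lattice α] [OrderTop α] [IsStronglyAtomic α]
    (h : LocallyBranched α) {p : α} (hp : p ≠ ⊤) (hco : ¬p ⋖ ⊤) :
    ∃ b e, p < b ∧ p < e ∧ b ⊓ e = p := by
  obtain ⟨b, hpb, -⟩ := exists_covBy_le_of_lt hp.lt_top
  have hb : b ≠ ⊤ := by
    rintro rfl
    exact hco hpb
  obtain ⟨c, hbc, -⟩ := exists_covBy_le_of_lt hb.lt_top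
  obtain ⟨e, hpe, heb⟩ := h.exists_covBy_ne hpb hbc
  exact ⟨b, e, hpb.lt, hpe.lt, hpb.wcovBy.inf_eq hpe.wcovBy heb.symm⟩

end LocallyBranched

theorem eq_sInf_coatoms_of_exists_lt_lt_inf_eq {α : Type*} [CompleteLattice α] [WellFoundedGT α]
    (h : ∀ p : α, p ≠ ⊤ → ¬p ⋖ ⊤ → ∃ b e, p < b ∧ p < e ∧ b ⊓ e = p) (p : α) :
    p = sInf {c : α | c ⋖ ⊤ ∧ p ≤ c} := by
  induction p using WellFoundedGT.induction with
  | _ p ih =>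
  refine le_antisymm (le_sInf fun c hc => hc.2) ?_
  by_cases htop : p = ⊤
  · exact htop.symm ▸ le_top
  by_cases hco : p ⋖ ⊤
  · exact sInf_le ⟨hco, le_rfl⟩
  obtain ⟨b, e, hpb, hpe, rfl⟩ := h p htop hco
  have sInf_le_of_lt {q : α} (hq : b ⊓ e < q) : sInf {c : α | c ⋖ ⊤ ∧ b ⊓ e ≤ c} ≤ q := by
    calc sInf {c : α | c ⋖ ⊤ ∧ b ⊓ e ≤ c} ≤ sInf {c : α | c ⋖ ⊤ ∧ q ≤ c} :=
          sInf_le_sInf fun c hc => ⟨hc.1, hq.le.trans hc.2⟩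
      _ = q := (ih q hq).symm
  exact le_inf (sInf_le_of_lt hpb) (sInf_le_of_lt hpe)

/-- Every finite locally branched lattice is coatomic: every element is the
infimum of the coatoms (elements covered by `⊤`) above it. -/
theorem locallyBranched_coatomic
    {L : Type*} [CompleteLattice L] [Fintype L]
    (hlb : ∀ a b c : L, a ⋖ b → b ⋖ c → ∃ d : L, d ≠ b ∧ a < d ∧ d < c) :
    ∀ p : L, p = sInf {c : L | c ⋖ ⊤ ∧ p ≤ c} :=
  eq_sInf_coatoms_of_exists_lt_lt_inf_eq fun _ hp hco =>
    LocallyBranched.exists_lt_lt_inf_eq hlb hp hco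
end

section
/- Let L be a finite locally branched lattice and let p, q ∈ L. Then p ≤ q if and only if Atoms(p) ⊆ Atoms(q), where Atoms(x) denotes the set of atoms of L below x. -/
theorem locallyBranched_atomistic
    {L : Type*} [CompleteLattice L] [Fintype L]
    (hlb : ∀ a b c : L, a ⋖ b → b ⋖ c → ∃ d : L, d ≠ b ∧ a < d ∧ d < c)
    (x : L) : x ≤ sSup {a : L | ⊥ ⋖ a ∧ a ≤ x} := by
  induction x using WellFoundedLT.induction with
  | ind x ih =>
    by_cases hx : x = ⊥
    · simp [hx]
    obtain ⟨y, -, hyx⟩ := exists_le_covBy_of_lt (bot_lt_iff_ne_bot.2 hx)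
    by_cases hy : y = ⊥
    · exact le_sSup ⟨hy ▸ hyx, le_rfl⟩
    obtain ⟨z, -, hzy⟩ := exists_le_covBy_of_lt (bot_lt_iff_ne_bot.2 hy)
    obtain ⟨d, hdy, hzd, hdx⟩ := hlb z y x hzy hyx
    have hdny : ¬ d ≤ y := fun h => hzy.2 hzd (h.lt_of_ne hdy)
    have hxyd : x = y ⊔ d := by
      refine le_antisymm ?_ (sup_le hyx.le hdx.le)
      rcases hyx.eq_or_eq (c := y ⊔ d) le_sup_left (sup_le hyx.le hdx.le) with h | h
      · exact absurd (le_sup_right.trans h.le) hdny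
      · exact h.ge
    have hmono : ∀ w : L, w < x → sSup {a : L | ⊥ ⋖ a ∧ a ≤ w} ≤ sSup {a : L | ⊥ ⋖ a ∧ a ≤ x} :=
      fun w hw => sSup_le_sSup fun a ⟨ha, haw⟩ => ⟨ha, haw.trans hw.le⟩
    calc x = y ⊔ d := hxyd
      _ ≤ _ := sup_le ((ih y hyx.lt).trans (hmono y hyx.lt)) ((ih d hdx).trans (hmono d hdx))

/-- In a finite locally branched lattice, `p ≤ q` if and only if every atom
below `p` is below `q`. -/
theorem locallyBranched_le_iff_atoms_subset
    {L : Type*} [CompleteLattice L] [Fintype L]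
    (hlb : ∀ a b c : L, a ⋖ b → b ⋖ c → ∃ d : L, d ≠ b ∧ a < d ∧ d < c)
    (p q : L) :
    p ≤ q ↔ {a : L | ⊥ ⋖ a ∧ a ≤ p} ⊆ {a : L | ⊥ ⋖ a ∧ a ≤ q} := by
  constructor
  · rintro h a ⟨ha, hap⟩
    exact ⟨ha, hap.trans h⟩
  · intro h
    refine (locallyBranched_atomistic hlb p).trans (sSup_le fun a ha => ?_)
    exact (h ha).2
end

section
/- Let L be a finite locally branched lattice and let p, q ∈ L. Then p ⊓ q = sSup (Atoms(p) ∩ Atoms(q)), where Atoms(x) denotes the set of atoms of L below x. -/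
lemma locallyBranched_eq_sSup_atoms
    {L : Type*} [CompleteLattice L] [Fintype L]
    (hlb : ∀ a b c : L, a ⋖ b → b ⋖ c → ∃ d : L, d ≠ b ∧ a < d ∧ d < c)
    (x : L) : x = sSup {a : L | ⊥ ⋖ a ∧ a ≤ x} := by
  induction x using WellFoundedLT.induction with
  | ind x ih =>
    have hle : sSup {a : L | ⊥ ⋖ a ∧ a ≤ x} ≤ x := sSup_le (fun a ha => ha.2)
    rcases eq_or_lt_of_le hle with h | h
    · exact h.symm
    · exfalso
      obtain ⟨b, hsb, hbx⟩ := exists_le_covBy_of_lt h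
      -- every atom below x is below b
      have hatoms : ∀ a : L, ⊥ ⋖ a → a ≤ x → a ≤ b := by
        intro a ha hax
        exact le_trans (le_sSup (Set.mem_setOf_eq ▸ ⟨ha, hax⟩)) hsb
      rcases eq_bot_or_bot_lt b with hb | hb
      · -- x is an atom
        have hx : ⊥ ⋖ x := hb ▸ hbx
        have := hatoms x hx le_rfl
        rw [hb] at this
        exact hx.lt.ne' (le_bot_iff.mp this)
      · obtain ⟨a, _, hab⟩ := exists_le_covBy_of_lt hb
        obtain ⟨d, hdb, had, hdx⟩ := hlb a b x hab hbx
        have hdatoms : d = sSup {e : L | ⊥ ⋖ e ∧ e ≤ d} := ih d hdx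
        have hdb' : d ≤ b := by
          rw [hdatoms]
          exact sSup_le (fun e he => hatoms e he.1 (he.2.trans hdx.le))
        exact hab.2 had (lt_of_le_of_ne hdb' hdb)

/-- In a finite locally branched lattice, the meet of two elements is the
supremum of the intersection of their sets of atoms. -/
theorem locallyBranched_inf_eq_sSup_atoms_inter
    {L : Type*} [CompleteLattice L] [Fintype L]
    (hlb : ∀ a b c : L, a ⋖ b → b ⋖ c → ∃ d : L, d ≠ b ∧ a < d ∧ d < c)
    (p q : L) :
    p ⊓ q = sSup ({a : L | ⊥ ⋖ a ∧ a ≤ p} ∩ {a : L | ⊥ ⋖ a ∧ a ≤ q}) := by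
  have h := locallyBranched_eq_sSup_atoms hlb (p ⊓ q)
  convert h using 2
  ext a
  simp only [Set.mem_inter_iff, Set.mem_setOf_eq, le_inf_iff]
  tauto
end

section
/- Let L be a finite locally branched lattice. Then the map p ↦ Atoms(p), sending each element to the set of atoms of L below it, is an injective meet-semilattice embedding of L into the powerset lattice of the set of atoms of L: it is injective and satisfies Atoms(p ⊓ q) = Atoms(p) ∩ Atoms(q) for all p, q ∈ L. -/
private theorem atomistic_aux {L : Type*} [CompleteLattice L] [Fintype L]
    (hlb : ∀ a b c : L, a ⋖ b → b ⋖ c → ∃ d : L, d ≠ b ∧ a < d ∧ d < c) :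
    ∀ x : L, x = sSup {a : L | ⊥ ⋖ a ∧ a ≤ x} := by
  have : WellFoundedLT L := Finite.to_wellFoundedLT
  have : WellFoundedGT L := Finite.to_wellFoundedGT
  have hS : ∀ p q : L, p ≤ q →
      sSup {a : L | ⊥ ⋖ a ∧ a ≤ p} ≤ sSup {a : L | ⊥ ⋖ a ∧ a ≤ q} :=
    fun p q hpq => sSup_le_sSup fun a ha => ⟨ha.1, ha.2.trans hpq⟩
  intro x
  induction x using WellFoundedLT.induction with
  | ind x IH =>
  refine le_antisymm ?_ (sSup_le fun a ha => ha.2)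
  rcases eq_or_lt_of_le (bot_le : (⊥ : L) ≤ x) with h | h
  · exact h ▸ bot_le
  obtain ⟨y, -, hy⟩ := exists_le_covBy_of_lt h
  rcases eq_or_lt_of_le (bot_le : (⊥ : L) ≤ y) with h' | h'
  · exact le_sSup ⟨h' ▸ hy, le_rfl⟩
  obtain ⟨z, -, hz⟩ := exists_le_covBy_of_lt h'
  obtain ⟨d, hdy, hzd, hdx⟩ := hlb z y x hz hy
  have hdny : ¬ d ≤ y := fun hle => hz.2 hzd (lt_of_le_of_ne hle hdy)
  have hlt : y < y ⊔ d := lt_of_le_of_ne le_sup_left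
    (fun h => hdny (h ▸ le_sup_right))
  have hsx : y ⊔ d = x := by
    rcases eq_or_lt_of_le (sup_le hy.lt.le hdx.le) with h'' | h''
    · exact h''
    · exact absurd h'' (hy.2 hlt).elim
  calc x = y ⊔ d := hsx.symm
    _ ≤ sSup {a : L | ⊥ ⋖ a ∧ a ≤ y} ⊔ sSup {a : L | ⊥ ⋖ a ∧ a ≤ d} :=
        sup_le_sup (IH y hy.lt).le (IH d hdx).le
    _ ≤ sSup {a : L | ⊥ ⋖ a ∧ a ≤ x} :=
        sup_le (hS y x hy.lt.le) (hS d x hdx.le)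

/-- In a finite locally branched lattice, the map sending an element to the set
of atoms below it is an injective meet-semilattice embedding into the powerset
of the set of atoms: it is injective and sends meets to intersections. -/
theorem locallyBranched_atoms_map_meet_embedding
    {L : Type*} [CompleteLattice L] [Fintype L]
    (hlb : ∀ a b c : L, a ⋖ b → b ⋖ c → ∃ d : L, d ≠ b ∧ a < d ∧ d < c) :
    Function.Injective (fun p : L => {a : L | ⊥ ⋖ a ∧ a ≤ p}) ∧
      ∀ p q : L, {a : L | ⊥ ⋖ a ∧ a ≤ p ⊓ q} =
        {a : L | ⊥ ⋖ a ∧ a ≤ p} ∩ {a : L | ⊥ ⋖ a ∧ a ≤ q} := by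
  constructor
  · intro p q hpq
    simp only at hpq
    rw [atomistic_aux hlb p, atomistic_aux hlb q, hpq]
  · intro p q
    ext a
    simp only [Set.mem_setOf_eq, Set.mem_inter_iff, le_inf_iff]
    tauto
end

section
/- Let L be a finite lattice that is not atomic (some element of L is not the supremum of the atoms below it). Then there exists a saturated chain a ⋖ b ⋖ c in L such that b is the only element of L with a < b < c; in other words, L contains an interval of length two with exactly three elements. -/
/-- If a finite lattice is not atomic, then it contains an interval of length
two with exactly three elements: a saturated chain `a ⋖ b ⋖ c` such that `b` is
the only element strictly between `a` and `c`. -/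
theorem not_atomic_exists_three_element_interval
    {L : Type*} [CompleteLattice L] [Fintype L]
    (h : ∃ p : L, p ≠ sSup {a : L | ⊥ ⋖ a ∧ a ≤ p}) :
    ∃ a b c : L, a ⋖ b ∧ b ⋖ c ∧ ∀ d : L, a < d → d < c → d = b := by
  classical
  obtain ⟨p, hp, hmin⟩ := (wellFounded_lt (α := L)).has_min
    {p : L | p ≠ sSup {a : L | ⊥ ⋖ a ∧ a ≤ p}} h
  set s := sSup {a : L | ⊥ ⋖ a ∧ a ≤ p} with hsdef
  have hsp : s ≤ p := sSup_le (fun a ha => ha.2)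
  have hslt : s < p := lt_of_le_of_ne hsp (fun e => hp e.symm)
  have key : ∀ q : L, q < p → q ≤ s := by
    intro q hq
    have hq' : q = sSup {a : L | ⊥ ⋖ a ∧ a ≤ q} := by
      by_contra hc
      exact hmin q hc hq
    calc q = sSup {a : L | ⊥ ⋖ a ∧ a ≤ q} := hq'
      _ ≤ s := sSup_le_sSup (fun a ha => ⟨ha.1, ha.2.trans hq.le⟩)
  have hpbot : p ≠ ⊥ := by
    intro e
    apply hp
    subst e
    symm
    rw [sSup_eq_bot]
    intro a ha
    exact le_bot_iff.mp ha.2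
  have hsbot : s ≠ ⊥ := by
    intro e
    have hcov : (⊥ : L) ⋖ p := by
      refine ⟨bot_lt_iff_ne_bot.mpr hpbot, fun d hd hdp => ?_⟩
      have := key d hdp
      rw [e] at this
      exact absurd (le_bot_iff.mp this) (ne_of_gt hd)
    have : p ≤ s := le_sSup ⟨hcov, le_rfl⟩
    rw [e] at this
    exact hpbot (le_bot_iff.mp this)
  obtain ⟨a, ha, hamax⟩ := (wellFounded_gt (α := L)).has_min
    {q : L | q < s} ⟨⊥, bot_lt_iff_ne_bot.mpr hsbot⟩
  have has : a ⋖ s := ⟨ha, fun d hd hds => hamax d hds hd⟩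
  have hsp' : s ⋖ p := ⟨hslt, fun d hd hdp => absurd (key d hdp) (not_le_of_gt hd)⟩
  refine ⟨a, s, p, has, hsp', fun d had hdp => ?_⟩
  have hds : d ≤ s := key d hdp
  rcases eq_or_lt_of_le hds with h' | h'
  · exact h'
  · exact absurd h' (has.2 had)
end

section
/- Let M be a matroid with finite ground set, and let F, G, H be flats of M such that F ⊂ G ⊂ H, no flat of M lies strictly between F and G, and no flat of M lies strictly between G and H. Then there exists a flat D of M with D ≠ G and F ⊂ D ⊂ H. (Hence the lattice of flats of a finite matroid is locally branched.) -/
/-!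
Take `x ∈ G \ F` and `y ∈ H \ G`, and let `D` be the closure of `F ∪ {y}`. It is a flat with
`F ⊂ D ⊆ H`, and `D ≠ G` since `y ∈ D`. If `x` were in `D`, the exchange property would put `y`
in the closure of `F ∪ {x}`, which lies in `G`; so `x ∈ H \ D` and `D ⊂ H`.
-/

open Set

namespace Matroid

variable {α : Type*} {M : Matroid α} {F G X : Set α} {x y : α}

lemma IsFlat.closure_subset_of_subset (hF : M.IsFlat F) (hXF : X ⊆ F) : M.closure X ⊆ F :=
  hF.closure ▸ M.closure_subset_closure hXF

lemma IsFlat.ssubset_closure_insert (hF : M.IsFlat F) (hy : y ∈ M.E) (hyF : y ∉ F) :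
    F ⊂ M.closure (insert y F) :=
  (ssubset_insert hyF).trans_subset (M.subset_closure _ (insert_subset hy hF.subset_ground))

lemma IsFlat.notMem_closure_insert (hF : M.IsFlat F) (hG : M.IsFlat G) (hFG : F ⊆ G)
    (hxG : x ∈ G) (hxF : x ∉ F) (hyG : y ∉ G) : x ∉ M.closure (insert y F) := by
  intro hx
  have hy : y ∈ M.closure (insert x F) := (closure_exchange ⟨hx, hF.closure.symm ▸ hxF⟩).1
  exact hyG (hG.closure_subset_of_subset (insert_subset hxG hFG) hy)

end Matroid

theorem matroid_flats_locallyBranched_general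
    {α : Type*} (M : Matroid α)
    (F G H : Set α) (hF : M.IsFlat F) (hG : M.IsFlat G) (hH : M.IsFlat H)
    (hFG : F ⊂ G) (hGH : G ⊂ H) :
    ∃ D : Set α, M.IsFlat D ∧ D ≠ G ∧ F ⊂ D ∧ D ⊂ H := by
  obtain ⟨x, hxG, hxF⟩ := exists_of_ssubset hFG
  obtain ⟨y, hyH, hyG⟩ := exists_of_ssubset hGH
  have hyE : y ∈ M.E := hH.subset_ground hyH
  have hyD : y ∈ M.closure (insert y F) :=
    M.mem_closure_of_mem (mem_insert y F) (insert_subset hyE hF.subset_ground)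
  have hDH : M.closure (insert y F) ⊆ H :=
    hH.closure_subset_of_subset (insert_subset hyH (hFG.subset.trans hGH.subset))
  refine ⟨M.closure (insert y F), M.isFlat_closure _, fun hDG ↦ hyG (hDG ▸ hyD),
    hF.ssubset_closure_insert hyE fun hyF ↦ hyG (hFG.subset hyF), ?_⟩
  exact (ssubset_iff_of_subset hDH).2
    ⟨x, hGH.subset hxG, hF.notMem_closure_insert hG hFG.subset hxG hxF hyG⟩

/-- The lattice of flats of a matroid on a finite ground set is locally
branched: given flats `F ⊂ G ⊂ H` with no flat strictly between `F` and `G`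
and no flat strictly between `G` and `H`, there is a flat `D ≠ G` with
`F ⊂ D ⊂ H`. -/
theorem matroid_flats_locallyBranched
    {α : Type*} (M : Matroid α) (hE : M.E.Finite)
    (F G H : Set α) (hF : M.IsFlat F) (hG : M.IsFlat G) (hH : M.IsFlat H)
    (hFG : F ⊂ G) (hGH : G ⊂ H)
    (hFGsat : ∀ D : Set α, M.IsFlat D → ¬(F ⊂ D ∧ D ⊂ G))
    (hGHsat : ∀ D : Set α, M.IsFlat D → ¬(G ⊂ D ∧ D ⊂ H)) :
    ∃ D : Set α, M.IsFlat D ∧ D ≠ G ∧ F ⊂ D ∧ D ⊂ H :=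
  matroid_flats_locallyBranched_general M F G H hF hG hH hFG hGH
end
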